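/- Every indecomposable balanced complex orthogonal design (BCOD) with 2 columns has parameters [2, 2, 1] and is equivalent to the 2×2 matrix with rows (z_1, 0) and (0, z_1^*). -/

import Mathlib

open Matrix

/-- A formal entry of a complex orthogonal design: either `0`, or `± z_i`, or `± z_i^*`.
Here `sign = true` means sign `+1`, and `conj = true` means the conjugated symbol `z_i^*`. -/
inductive CODEntry (k : ℕ) : Type where
  | zero : CODEntry k
  | var (sign : Bool) (conj : Bool) (idx : Fin k) : CODEntry k
deriving DecidableEq

namespace CODEntry

variable {k k' : ℕ}

/-- Evaluate a formal entry at an assignment of complex values to the indeterminates. -/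
def eval (z : Fin k → ℂ) : CODEntry k → ℂ
  | zero => 0
  | var s c i => (if s then (1 : ℂ) else -1) * (if c then (starRingEnd ℂ) (z i) else z i)

/-- Formal negation of an entry. -/
def neg : CODEntry k → CODEntry k
  | zero => zero
  | var s c i => var (!s) c i

/-- Formal conjugation of an entry (with `0^* = 0`). -/
def conj : CODEntry k → CODEntry k
  | zero => zero
  | var s c i => var s (!c) i

/-- Optionally negate an entry. -/
def negIf (b : Bool) (e : CODEntry k) : CODEntry k := if b then e.neg else e

/-- Rename variables according to a permutation of the indices. -/
def rename (σ : Equiv.Perm (Fin k)) : CODEntry k → CODEntry k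
  | zero => zero
  | var s c i => var s c (σ i)

/-- Negate all instances of the variable `z_j`. -/
def negVar (j : Fin k) : CODEntry k → CODEntry k
  | zero => zero
  | var s c i => if i = j then var (!s) c i else var s c i

/-- Conjugate all instances of the variable `z_j` (swap `z_j ↔ z_j^*`). -/
def conjVar (j : Fin k) : CODEntry k → CODEntry k
  | zero => zero
  | var s c i => if i = j then var s (!c) i else var s c i

/-- Transport an entry along a map of variable index sets. -/
def mapIdx (f : Fin k → Fin k') : CODEntry k → CODEntry k'
  | zero => zero
  | var s c i => var s c (f i)

/-- Whether a (nonzero) entry is a conjugated symbol `± z_i^*`. -/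
def isConj : CODEntry k → Bool
  | zero => false
  | var _ c _ => c

/-- The index of the variable occurring in an entry, if any. -/
def index : CODEntry k → Option (Fin k)
  | zero => none
  | var _ _ i => some i

end CODEntry

/-- `G` is a `[p, n, k]` complex orthogonal design (COD): for every assignment of complex
values to the indeterminates, `Gᴴ * G = (|z_1|² + … + |z_k|²) • I_n`. -/
def IsCOD {p n k : ℕ} (G : Matrix (Fin p) (Fin n) (CODEntry k)) : Prop :=
  ∀ z : Fin k → ℂ,
    (G.map (CODEntry.eval z))ᴴ * (G.map (CODEntry.eval z)) =
      ((∑ i, Complex.normSq (z i) : ℝ) : ℂ) • (1 : Matrix (Fin n) (Fin n) ℂ)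

/-- The equivalence operations on `[p, n, k]` CODs. -/
inductive EquivOp (p n k : ℕ) : Type where
  | rowPerm (σ : Equiv.Perm (Fin p))
  | rowNeg (r : Fin p)
  | colPerm (σ : Equiv.Perm (Fin n))
  | colNeg (c : Fin n)
  | varRename (σ : Equiv.Perm (Fin k))
  | varNeg (i : Fin k)
  | varConj (i : Fin k)

namespace EquivOp

variable {p n k : ℕ}

/-- Apply an equivalence operation to a matrix of formal entries. -/
def apply (G : Matrix (Fin p) (Fin n) (CODEntry k)) :
    EquivOp p n k → Matrix (Fin p) (Fin n) (CODEntry k)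
  | rowPerm σ => fun r c => G (σ r) c
  | rowNeg r₀ => fun r c => if r = r₀ then (G r c).neg else G r c
  | colPerm σ => fun r c => G r (σ c)
  | colNeg c₀ => fun r c => if c = c₀ then (G r c).neg else G r c
  | varRename σ => fun r c => (G r c).rename σ
  | varNeg i => fun r c => (G r c).negVar i
  | varConj i => fun r c => (G r c).conjVar i

/-- The operation is a column permutation. -/
def IsColPerm : EquivOp p n k → Prop
  | colPerm _ => True
  | _ => False

/-- The operation is a column negation. -/
def IsColNeg : EquivOp p n k → Prop
  | colNeg _ => True
  | _ => False

/-- The operation is a variable renaming. -/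
def IsVarRename : EquivOp p n k → Prop
  | varRename _ => True
  | _ => False

/-- Where each row of the original matrix is sent by the operation. -/
def rowMap : EquivOp p n k → Equiv.Perm (Fin p)
  | rowPerm σ => σ⁻¹
  | _ => 1

end EquivOp

/-- Apply a finite sequence of equivalence operations, in order. -/
def applyOps {p n k : ℕ} (G : Matrix (Fin p) (Fin n) (CODEntry k))
    (ops : List (EquivOp p n k)) : Matrix (Fin p) (Fin n) (CODEntry k) :=
  ops.foldl EquivOp.apply G

/-- Where each row of the original matrix is sent by a sequence of operations. -/
def opsRowMap {p n k : ℕ} (ops : List (EquivOp p n k)) : Equiv.Perm (Fin p) :=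
  ops.foldl (fun τ op => op.rowMap * τ) 1

/-- An operation on a COD with `m + m` columns is column-restricted if, in case it is a
column permutation, it is the transposition of columns `i` and `m + i` for some `i`. -/
def EquivOp.ColumnRestricted {p m k : ℕ} : EquivOp p (m + m) k → Prop
  | .colPerm σ => ∃ i : Fin m, σ = Equiv.swap (Fin.castAdd m i) (Fin.natAdd m i)
  | _ => True

/-- `G` contains the `B_i` form submatrix on the `2m` rows selected by the embedding `f`:
the block matrix `((z_i I_m, M), (−Mᴴ, z_i^* I_m))` where `M` is the top-right block. -/
def ContainsBFormWith {p m k : ℕ} (G : Matrix (Fin p) (Fin (m + m)) (CODEntry k))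
    (i : Fin k) (f : Fin (m + m) ↪ Fin p) : Prop :=
  (∀ r s : Fin m, G (f (Fin.castAdd m r)) (Fin.castAdd m s) =
      if r = s then CODEntry.var true false i else CODEntry.zero) ∧
  (∀ r s : Fin m, G (f (Fin.natAdd m r)) (Fin.natAdd m s) =
      if r = s then CODEntry.var true true i else CODEntry.zero) ∧
  (∀ r s : Fin m, G (f (Fin.natAdd m r)) (Fin.castAdd m s) =
      ((G (f (Fin.castAdd m s)) (Fin.natAdd m r)).conj).neg)

/-- As `ContainsBFormWith`, and moreover the top-right block `M` is (formally)
skew-symmetric: `Mᵀ = −M`. -/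
def ContainsSkewBFormWith {p m k : ℕ} (G : Matrix (Fin p) (Fin (m + m)) (CODEntry k))
    (i : Fin k) (f : Fin (m + m) ↪ Fin p) : Prop :=
  ContainsBFormWith G i f ∧
  ∀ r s : Fin m, G (f (Fin.castAdd m s)) (Fin.natAdd m r) =
    (G (f (Fin.castAdd m r)) (Fin.natAdd m s)).neg

/-- `G` is in `B_i` form: after equivalence operations excluding column permutations
(and not renaming variables), it contains the `B_i` form submatrix. -/
def InBForm {p m k : ℕ} (G : Matrix (Fin p) (Fin (m + m)) (CODEntry k)) (i : Fin k) : Prop :=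
  ∃ ops : List (EquivOp p (m + m) k),
    (∀ op ∈ ops, ¬ op.IsColPerm ∧ ¬ op.IsVarRename) ∧
    ∃ f, ContainsBFormWith (applyOps G ops) i f

/-- `G` is in `B_i` form with skew-symmetric block `M_i`. -/
def InSkewBForm {p m k : ℕ} (G : Matrix (Fin p) (Fin (m + m)) (CODEntry k)) (i : Fin k) : Prop :=
  ∃ ops : List (EquivOp p (m + m) k),
    (∀ op ∈ ops, ¬ op.IsColPerm ∧ ¬ op.IsVarRename) ∧
    ∃ f, ContainsSkewBFormWith (applyOps G ops) i f

/-- `G` is a balanced complex orthogonal design (BCOD) with `2m` columns: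
a COD in which every row has exactly `m` zero entries (hence `m` nonzero ones),
every row is conjugation-separated, and for each variable `z_j` it is in `B_j` form
with skew-symmetric block `M_j`. -/
def IsBCOD {p m k : ℕ} (G : Matrix (Fin p) (Fin (m + m)) (CODEntry k)) : Prop :=
  IsCOD G ∧
  (∀ r : Fin p, (Finset.univ.filter fun c => G r c = CODEntry.zero).card = m) ∧
  (∀ r : Fin p,
      (∀ c, G r c ≠ CODEntry.zero → (G r c).isConj = true) ∨
      (∀ c, G r c ≠ CODEntry.zero → (G r c).isConj = false)) ∧
  (∀ j : Fin k, InSkewBForm G j)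

/-- `G` is the direct sum of `G₁` (on top) and `G₂` (below), where `G₁` and `G₂` use
disjoint sets of indeterminates, embedded into `Fin k` via `ι₁` and `ι₂`. -/
def IsDirectSumOf {p n k p₁ p₂ k₁ k₂ : ℕ} (hp : p = p₁ + p₂)
    (G : Matrix (Fin p) (Fin n) (CODEntry k))
    (G₁ : Matrix (Fin p₁) (Fin n) (CODEntry k₁))
    (G₂ : Matrix (Fin p₂) (Fin n) (CODEntry k₂))
    (ι₁ : Fin k₁ ↪ Fin k) (ι₂ : Fin k₂ ↪ Fin k) : Prop :=
  k = k₁ + k₂ ∧ (∀ a b, ι₁ a ≠ ι₂ b) ∧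
  ∀ (r : Fin p) (c : Fin n),
    if h : (r : ℕ) < p₁ then G r c = (G₁ ⟨(r : ℕ), h⟩ c).mapIdx (fun i => ι₁ i)
    else G r c = (G₂ ⟨(r : ℕ) - p₁, by have := r.isLt; omega⟩ c).mapIdx (fun i => ι₂ i)

/-- A COD is decomposable if, after a permutation of its rows, it can be expressed as
the direct sum of two (nonempty) CODs on disjoint sets of indeterminates. -/
def IsDecomposable {p n k : ℕ} (G : Matrix (Fin p) (Fin n) (CODEntry k)) : Prop :=
  ∃ (σ : Equiv.Perm (Fin p)) (p₁ p₂ k₁ k₂ : ℕ) (hp : p = p₁ + p₂)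
    (G₁ : Matrix (Fin p₁) (Fin n) (CODEntry k₁))
    (G₂ : Matrix (Fin p₂) (Fin n) (CODEntry k₂))
    (ι₁ : Fin k₁ ↪ Fin k) (ι₂ : Fin k₂ ↪ Fin k),
    0 < p₁ ∧ 0 < p₂ ∧ IsCOD G₁ ∧ IsCOD G₂ ∧
    IsDirectSumOf hp (fun r c => G (σ r) c) G₁ G₂ ι₁ ι₂

/-- Rows `r₁` and `r₂` of `G` form a pair: if `r₁` is `(α₁,…,α_m, β₁,…,β_m)` then `r₂`
is `(±β₁^*,…,±β_m^*, ±α₁^*,…,±α_m^*)` (the signs may differ from entry to entry). -/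
def IsPairRows {p m k : ℕ} (G : Matrix (Fin p) (Fin (m + m)) (CODEntry k))
    (r₁ r₂ : Fin p) : Prop :=
  ∀ s : Fin m,
    (∃ b : Bool, G r₂ (Fin.castAdd m s) = CODEntry.negIf b ((G r₁ (Fin.natAdd m s)).conj)) ∧
    (∃ b : Bool, G r₂ (Fin.natAdd m s) = CODEntry.negIf b ((G r₁ (Fin.castAdd m s)).conj))

/-- The canonical `[2, 2, 1]` BCOD with rows `(z₁, 0)` and `(0, z₁^*)`. -/
def canonicalBCOD2 : Matrix (Fin 2) (Fin (1 + 1)) (CODEntry 1) :=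
  fun r c =>
    if (r : ℕ) = 0 then
      (if (c : ℕ) = 0 then CODEntry.var true false 0 else CODEntry.zero)
    else
      (if (c : ℕ) = 0 then CODEntry.zero else CODEntry.var true true 0)

/-! Evaluating the COD identity at a unit vector shows that every variable occurs exactly once
in every column. With two columns and one zero per row, the rows `r₀`, `r₁` holding `z₀` in
columns `0` and `1` contain nothing else, and no other row contains `z₀`; putting `z₀ = 0`,
resp. all other variables `= 0`, shows that both the pair and the remaining rows are CODs, so
they split off as a direct sum. Indecomposability leaves only `r₀` and `r₁`, hence `p = 2` and
`k = 1`, and the `B₀` form, whose `1 × 1` skew-symmetric block must vanish, is the canonical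
design up to a row permutation. -/

namespace CODEntry

variable {k k' : ℕ}

lemma eval_congr {e : CODEntry k} {z z' : Fin k → ℂ}
    (h : ∀ i, e.index = some i → z i = z' i) : e.eval z = e.eval z' := by
  cases e with
  | zero => rfl
  | var s c i => simp [eval, h i rfl]

lemma eval_eq_zero {e : CODEntry k} {z : Fin k → ℂ} (h : ∀ i, e.index = some i → z i = 0) :
    e.eval z = 0 := by
  cases e with
  | zero => rfl
  | var s c i => simp [eval, h i rfl]

lemma normSq_eval_single (e : CODEntry k) (j : Fin k) :
    Complex.normSq (e.eval (Pi.single j 1)) = if e.index = some j then 1 else 0 := by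
  cases e with
  | zero => simp [eval, index]
  | var s c i =>
    by_cases hij : i = j
    · subst hij; cases s <;> cases c <;> simp [eval, index]
    · simp [eval, index, hij]

lemma eval_mapIdx (f : Fin k → Fin k') (z : Fin k' → ℂ) (e : CODEntry k) :
    (e.mapIdx f).eval z = e.eval (z ∘ f) := by
  cases e <;> rfl

lemma mapIdx_mapIdx {k'' : ℕ} (f : Fin k → Fin k') (g : Fin k' → Fin k'') (e : CODEntry k) :
    (e.mapIdx f).mapIdx g = e.mapIdx (g ∘ f) := by
  cases e <;> rfl

lemma mapIdx_eq_self {f : Fin k → Fin k} {e : CODEntry k}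
    (h : ∀ i, e.index = some i → f i = i) : e.mapIdx f = e := by
  cases e with
  | zero => rfl
  | var s c i => simp [mapIdx, h i rfl]

def pred : CODEntry (k + 1) → CODEntry k
  | zero => zero
  | var s c i => if h : i = 0 then zero else var s c (i.pred h)

lemma eval_pred (z : Fin k → ℂ) (e : CODEntry (k + 1)) :
    e.pred.eval z = e.eval (Fin.cons 0 z) := by
  cases e with
  | zero => rfl
  | var s c i =>
    by_cases h : i = 0
    · subst h; simp [pred, eval]
    · obtain ⟨j, rfl⟩ := Fin.exists_succ_eq.mpr h
      simp [pred, eval]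

lemma mapIdx_succ_pred {e : CODEntry (k + 1)} (h : e.index ≠ some 0) :
    e.pred.mapIdx Fin.succ = e := by
  cases e with
  | zero => rfl
  | var s c i =>
    have hi : i ≠ 0 := fun hi => h (by rw [hi]; rfl)
    simp [pred, mapIdx, hi]

lemma eq_zero_of_eq_neg {e : CODEntry k} (h : e = e.neg) : e = zero := by
  cases e with
  | zero => rfl
  | var s c i => simp [neg] at h

end CODEntry

open Finset

section COD

variable {p n k : ℕ}

lemma isCOD_iff {G : Matrix (Fin p) (Fin n) (CODEntry k)} :
    IsCOD G ↔ ∀ (z : Fin k → ℂ) (c d : Fin n),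
      ∑ r, star ((G r c).eval z) * (G r d).eval z =
        if c = d then ((∑ i, Complex.normSq (z i) : ℝ) : ℂ) else 0 := by
  simp only [IsCOD, ← Matrix.ext_iff, Matrix.mul_apply, Matrix.conjTranspose_apply,
    Matrix.map_apply, Matrix.smul_apply, Matrix.one_apply, smul_eq_mul, mul_ite, mul_one, mul_zero]

lemma IsCOD.submatrix_perm {G : Matrix (Fin p) (Fin n) (CODEntry k)} (hG : IsCOD G)
    (σ : Equiv.Perm (Fin p)) : IsCOD (G.submatrix σ id) := by
  rw [isCOD_iff] at hG ⊢
  intro z c d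
  rw [← hG z c d]
  exact Equiv.sum_comp σ fun r => star ((G r c).eval z) * (G r d).eval z

theorem IsCOD.existsUnique_index_eq {G : Matrix (Fin p) (Fin n) (CODEntry k)} (hG : IsCOD G)
    (j : Fin k) (c : Fin n) : ∃! r, (G r c).index = some j := by
  have h := isCOD_iff.1 hG (Pi.single j 1) c c
  simp only [if_true, Complex.star_def, ← Complex.normSq_eq_conj_mul_self,
    CODEntry.normSq_eval_single] at h
  rw [Fintype.existsUnique_iff_card_one, card_filter]
  have hsum : ∑ i, Complex.normSq ((Pi.single j 1 : Fin k → ℂ) i) = 1 := by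
    simp [Pi.single_apply, apply_ite Complex.normSq]
  rw [hsum] at h
  exact_mod_cast h

theorem IsCOD.isDecomposable_of_split {p₁ p₂ : ℕ}
    {G : Matrix (Fin p) (Fin n) (CODEntry (k + 1))} (hG : IsCOD G)
    (hp : p = p₁ + p₂) (hp₁ : 0 < p₁) (hp₂ : 0 < p₂) (σ : Equiv.Perm (Fin p))
    (htop : ∀ r : Fin p, (r : ℕ) < p₁ → ∀ c j, (G (σ r) c).index = some j → j = 0)
    (hbot : ∀ r : Fin p, p₁ ≤ (r : ℕ) → ∀ c, (G (σ r) c).index ≠ some 0) :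
    IsDecomposable G := by
  subst hp
  have hH := isCOD_iff.1 (hG.submatrix_perm σ)
  simp only [Matrix.submatrix_apply, id_eq] at hH
  refine ⟨σ, p₁, p₂, 1, k, rfl, fun i c => (G (σ (Fin.castAdd p₂ i)) c).mapIdx fun _ => 0,
    fun i c => (G (σ (Fin.natAdd p₁ i)) c).pred,
    ⟨fun _ => 0, fun a b _ => Subsingleton.elim a b⟩, ⟨Fin.succ, Fin.succ_injective _⟩,
    hp₁, hp₂, isCOD_iff.2 fun w c d => ?_, isCOD_iff.2 fun w c d => ?_, by omega,
    fun a b => (Fin.succ_ne_zero b).symm, fun r c => ?_⟩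
  · -- evaluate `G` at `(w₀, 0, …, 0)`, which kills the bottom block
    have hbot0 : ∀ i c, (G (σ (Fin.natAdd p₁ i)) c).eval (Fin.cons (w 0) 0) = 0 := fun i c =>
      CODEntry.eval_eq_zero fun j hj => by
        have hj0 : j ≠ 0 := by rintro rfl; exact hbot _ (by simp) c hj
        obtain ⟨j, rfl⟩ := Fin.exists_succ_eq.mpr hj0
        rfl
    have htop0 : ∀ i c, ((G (σ (Fin.castAdd p₂ i)) c).mapIdx fun _ => 0).eval w =
        (G (σ (Fin.castAdd p₂ i)) c).eval (Fin.cons (w 0) 0) := fun i c => by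
      rw [CODEntry.eval_mapIdx]
      exact CODEntry.eval_congr fun j hj => by rw [htop _ (by simp) c j hj]; rfl
    simpa [Fin.sum_univ_add, Fin.sum_univ_succ, hbot0, htop0] using hH (Fin.cons (w 0) 0) c d
  · -- evaluate `G` at `(0, w)`, which kills the top block
    have htop0 : ∀ i c, (G (σ (Fin.castAdd p₂ i)) c).eval (Fin.cons 0 w) = 0 := fun i c =>
      CODEntry.eval_eq_zero fun j hj => by rw [htop _ (by simp) c j hj]; rfl
    simpa [Fin.sum_univ_add, Fin.sum_univ_succ, htop0, CODEntry.eval_pred]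
      using hH (Fin.cons 0 w) c d
  · split_ifs with h
    · change G (σ r) c = ((G (σ r) c).mapIdx _).mapIdx _
      rw [CODEntry.mapIdx_mapIdx]
      exact (CODEntry.mapIdx_eq_self fun j hj => (htop r h c j hj).symm).symm
    · have hr : Fin.natAdd p₁ ⟨r - p₁, by omega⟩ = r := Fin.ext (by simp; omega)
      change G (σ r) c = (G (σ (Fin.natAdd p₁ _)) c).pred.mapIdx Fin.succ
      rw [hr, CODEntry.mapIdx_succ_pred (hbot r (by omega) c)]

theorem IsCOD.isDecomposable_of_finset {G : Matrix (Fin p) (Fin n) (CODEntry (k + 1))}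
    (hG : IsCOD G) (S : Finset (Fin p)) (hS : S.Nonempty) (hSc : ∃ r, r ∉ S)
    (hin : ∀ r ∈ S, ∀ c j, (G r c).index = some j → j = 0)
    (hout : ∀ r ∉ S, ∀ c, (G r c).index ≠ some 0) :
    IsDecomposable G := by
  obtain ⟨r, hr⟩ := hSc
  have hcard : #S < p := by simpa using card_lt_univ_of_notMem hr
  have hσ : Fintype.card {r : Fin p // (r : ℕ) < #S} = Fintype.card S := by
    rw [Fintype.card_fin_lt_of_le hcard.le, Fintype.card_coe]
  set σ := (Fintype.equivOfCardEq hσ).extendSubtype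
  refine hG.isDecomposable_of_split (by omega : p = #S + (p - #S)) hS.card_pos (by omega) σ
    (fun r hr => hin _ (Equiv.extendSubtype_mem _ r hr))
    (fun r hr => hout _ (Equiv.extendSubtype_not_mem _ r (by omega)))

end COD

lemma card_filter_fin_two_eq_one_iff (P : Fin 2 → Prop) [DecidablePred P] :
    #{i | P i} = 1 ↔ (P 0 ↔ ¬ P 1) := by
  rw [card_filter, Fin.sum_univ_two]
  by_cases h0 : P 0 <;> by_cases h1 : P 1 <;> simp [h0, h1]

theorem IsCOD.exists_pair_rows_of_two_columns {p k : ℕ}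
    {G : Matrix (Fin p) (Fin (1 + 1)) (CODEntry k)} (hG : IsCOD G)
    (hbal : ∀ r, #{c | G r c = .zero} = 1) (j : Fin k) :
    ∃ S : Finset (Fin p), #S = 2 ∧ (∀ r ∈ S, ∀ c i, (G r c).index = some i → i = j) ∧
      ∀ r ∉ S, ∀ c, (G r c).index ≠ some j := by
  have hzero r := (card_filter_fin_two_eq_one_iff _).1 (hbal r)
  obtain ⟨r₀, h₀, hu₀⟩ := hG.existsUnique_index_eq j 0
  obtain ⟨r₁, h₁, hu₁⟩ := hG.existsUnique_index_eq j 1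
  have hr₀ : G r₀ 1 = .zero := by
    by_contra h
    simp [(hzero r₀).2 h, CODEntry.index] at h₀
  have hr₁ : G r₁ 0 = .zero := (hzero r₁).2 fun h => by simp [h, CODEntry.index] at h₁
  have hne : r₀ ≠ r₁ := by rintro rfl; simp [hr₁, CODEntry.index] at h₀
  refine ⟨{r₀, r₁}, card_pair hne, fun r hr c i hi => ?_, fun r hr c hc => hr ?_⟩
  · simp only [mem_insert, mem_singleton] at hr
    rcases hr with rfl | rfl <;> fin_cases c
    · exact Option.some_inj.1 (hi.symm.trans h₀)
    · simp [hr₀, CODEntry.index] at hi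
    · simp [hr₁, CODEntry.index] at hi
    · exact Option.some_inj.1 (hi.symm.trans h₁)
  · fin_cases c
    · simp [hu₀ r hc]
    · simp [hu₁ r hc]

/-- For `m = 1` the skew-symmetric block `M` vanishes, so the `B₀` form is the whole design. -/
theorem InSkewBForm.exists_applyOps_eq_canonicalBCOD2
    {G : Matrix (Fin 2) (Fin (1 + 1)) (CODEntry 1)} (hG : InSkewBForm G 0) :
    ∃ ops, applyOps G ops = canonicalBCOD2 := by
  obtain ⟨ops, -, f, ⟨hdiag, hdiag', hlow⟩, hskew⟩ := hG
  have hM : applyOps G ops (f (Fin.castAdd 1 0)) (Fin.natAdd 1 0) = .zero :=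
    CODEntry.eq_zero_of_eq_neg (hskew 0 0)
  have hf : ∀ r c, applyOps G ops (f r) c = canonicalBCOD2 r c := by
    intro r c
    fin_cases r <;> fin_cases c
    · exact hdiag 0 0
    · exact hM
    · exact (hlow 0 0).trans (by rw [hM]; rfl)
    · exact hdiag' 0 0
  refine ⟨ops ++ [.rowPerm (Equiv.ofBijective f f.injective.bijective_of_finite)], ?_⟩
  ext r c
  rw [applyOps, List.foldl_append]
  exact hf r c

/-- every indecomposable BCOD with `2` columns has parameters `[2, 2, 1]`
and is equivalent to the matrix with rows `(z₁, 0)` and `(0, z₁^*)`. -/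
theorem bcod_two_columns_canonical {p k : ℕ} (hk : 1 ≤ k)
    (G : Matrix (Fin p) (Fin (1 + 1)) (CODEntry k))
    (hG : IsBCOD G) (hind : ¬ IsDecomposable G) :
    ∃ (hp : p = 2) (hkk : k = 1),
      ∃ ops : List (EquivOp 2 (1 + 1) 1),
        applyOps (fun r c => (G (Fin.cast hp.symm r) c).mapIdx (Fin.cast hkk)) ops =
          canonicalBCOD2 := by
  obtain ⟨hcod, hbal, -, hB⟩ := hG
  obtain ⟨k, rfl⟩ : ∃ k', k = k' + 1 := ⟨k - 1, by omega⟩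
  obtain ⟨S, hS, hin, hout⟩ := hcod.exists_pair_rows_of_two_columns hbal 0
  have hall : ∀ r, r ∈ S := by
    by_contra! hSc
    exact hind (hcod.isDecomposable_of_finset S (card_pos.1 (by omega)) hSc hin hout)
  have hp : p = 2 := by
    rw [← hS, eq_univ_of_forall hall, card_univ, Fintype.card_fin]
  have hk0 : k = 0 := by
    obtain ⟨r, hr, -⟩ := hcod.existsUnique_index_eq (Fin.last k) 0
    simpa [Fin.ext_iff] using hin r (hall r) 0 _ hr
  subst hp hk0
  refine ⟨rfl, rfl, ?_⟩
  simpa [CODEntry.mapIdx_eq_self] using (hB 0).exists_applyOps_eq_canonicalBCOD2
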